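/- arXiv:2206.08766 — 5 statements merged into one kernel-verified Lean document; each statement's English description precedes it below -/
import Mathlib

section
/- If φ, ψ : ℝ² → [0,∞) are integrable, radially symmetric, and radially non-increasing (i.e., φ(x) = ρ(|x|) for a non-increasing ρ, and similarly for ψ), then their convolution φ * ψ is radially symmetric and radially non-increasing. -/
/-! By the layer-cake formula applied to both factors, `∫ φ (y - z) * ψ z dz` is the integral over
`s, t > 0` of the area of `(y - {φ > t}) ∩ {ψ > s}`. Superlevel sets of radially non-increasing
functions are the whole plane or, up to a circle, closed discs centred at `0`, so it suffices that
the area of `closedBall y r₁ ∩ closedBall 0 r₂` is non-increasing in `‖y‖`. After a reflection `y`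
lies on the first axis, and slicing by horizontal lines reduces this to the fact that two intervals
of fixed lengths centred at `0` and at `d ≥ 0` overlap less as `d` grows. -/

open MeasureTheory

/-- A function on `ℝ²` is radially symmetric and non-increasing iff its value
depends only on the norm and is non-increasing in the norm. -/
def RadialNonincreasing (f : EuclideanSpace ℝ (Fin 2) → ℝ) : Prop :=
  ∀ x y : EuclideanSpace ℝ (Fin 2), ‖x‖ ≤ ‖y‖ → f y ≤ f x

open Set Metric
open scoped ENNReal

local notation "E2" => EuclideanSpace ℝ (Fin 2)

lemma volume_Icc_inter_Icc_le_of_le {d d' α β : ℝ} (hd : 0 ≤ d) (hdd' : d ≤ d') :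
    volume (Icc (d' - α) (d' + α) ∩ Icc (-β) β) ≤ volume (Icc (d - α) (d + α) ∩ Icc (-β) β) := by
  simp only [Icc_inter_Icc, Real.volume_Icc]
  refine ENNReal.ofReal_le_ofReal ?_
  simp only [min_def, max_def]
  split_ifs <;> linarith

lemma volume_setOf_sq_sub_le_and_sq_le_le {a b d d' : ℝ} (hd : 0 ≤ d) (hdd' : d ≤ d') :
    volume {x : ℝ | (x - d') ^ 2 ≤ a ∧ x ^ 2 ≤ b}
      ≤ volume {x : ℝ | (x - d) ^ 2 ≤ a ∧ x ^ 2 ≤ b} := by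
  rcases lt_or_ge a 0 with ha | ha
  · have : {x : ℝ | (x - d') ^ 2 ≤ a ∧ x ^ 2 ≤ b} = ∅ :=
      eq_empty_of_forall_notMem fun x hx => (sq_nonneg _).not_gt (hx.1.trans_lt ha)
    simp [this]
  rcases lt_or_ge b 0 with hb | hb
  · have : {x : ℝ | (x - d') ^ 2 ≤ a ∧ x ^ 2 ≤ b} = ∅ :=
      eq_empty_of_forall_notMem fun x hx => (sq_nonneg _).not_gt (hx.2.trans_lt hb)
    simp [this]
  have hIcc : ∀ c : ℝ,
      {x : ℝ | (x - c) ^ 2 ≤ a ∧ x ^ 2 ≤ b} = Icc (c - √a) (c + √a) ∩ Icc (-√b) √b := by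
    intro c
    ext x
    simp only [mem_ofPred_eq, mem_inter_iff, mem_Icc, Real.sq_le ha, Real.sq_le hb]
    constructor <;> rintro ⟨⟨h₁, h₂⟩, h₃⟩ <;> exact ⟨⟨by linarith, by linarith⟩, h₃⟩
  rw [hIcc, hIcc]
  exact volume_Icc_inter_Icc_le_of_le hd hdd'

lemma volume_setOf_prod_sq_sub_le_and_sq_le_le {a b d d' : ℝ} (hd : 0 ≤ d) (hdd' : d ≤ d') :
    volume {p : ℝ × ℝ | (p.1 - d') ^ 2 ≤ a - p.2 ^ 2 ∧ p.1 ^ 2 ≤ b - p.2 ^ 2}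
      ≤ volume {p : ℝ × ℝ | (p.1 - d) ^ 2 ≤ a - p.2 ^ 2 ∧ p.1 ^ 2 ≤ b - p.2 ^ 2} := by
  rw [Measure.volume_eq_prod, Measure.prod_apply_symm (by measurability),
    Measure.prod_apply_symm (by measurability)]
  exact lintegral_mono fun w =>
    volume_setOf_sq_sub_le_and_sq_le_le (a := a - w ^ 2) (b := b - w ^ 2) hd hdd'

lemma EuclideanSpace.measurePreserving_fin_two_coords :
    MeasurePreserving (fun z : E2 => (z 0, z 1)) :=
  (volume_preserving_finTwoArrow ℝ).comp (PiLp.volume_preserving_ofLp (Fin 2))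

lemma volume_closedBall_single_inter_closedBall_le {d d' : ℝ} (r₁ r₂ : ℝ) (hd : 0 ≤ d)
    (hdd' : d ≤ d') :
    volume (closedBall (EuclideanSpace.single 0 d' : E2) r₁ ∩ closedBall 0 r₂)
      ≤ volume (closedBall (EuclideanSpace.single 0 d : E2) r₁ ∩ closedBall 0 r₂) := by
  rcases lt_or_ge r₁ 0 with hr₁ | hr₁
  · simp [closedBall_eq_empty.2 hr₁]
  rcases lt_or_ge r₂ 0 with hr₂ | hr₂
  · simp [closedBall_eq_empty.2 hr₂]
  have hcoords : ∀ c : ℝ, closedBall (EuclideanSpace.single 0 c : E2) r₁ ∩ closedBall 0 r₂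
      = (fun z : E2 => (z 0, z 1)) ⁻¹'
        {p | (p.1 - c) ^ 2 ≤ r₁ ^ 2 - p.2 ^ 2 ∧ p.1 ^ 2 ≤ r₂ ^ 2 - p.2 ^ 2} := by
    intro c
    ext z
    simp [EuclideanSpace.dist_eq, EuclideanSpace.norm_eq, Real.sqrt_le_left hr₁,
      Real.sqrt_le_left hr₂, le_sub_iff_add_le, Real.dist_eq]
  rw [hcoords, hcoords,
    EuclideanSpace.measurePreserving_fin_two_coords.measure_preimage (by measurability),
    EuclideanSpace.measurePreserving_fin_two_coords.measure_preimage (by measurability)]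
  exact volume_setOf_prod_sq_sub_le_and_sq_le_le hd hdd'

lemma volume_closedBall_inter_closedBall_zero_congr {E : Type*} [NormedAddCommGroup E]
    [InnerProductSpace ℝ E] [FiniteDimensional ℝ E] [MeasurableSpace E] [BorelSpace E]
    {x y : E} (h : ‖x‖ = ‖y‖) (r₁ r₂ : ℝ) :
    volume (closedBall x r₁ ∩ closedBall 0 r₂) = volume (closedBall y r₁ ∩ closedBall 0 r₂) := by
  set R := (ℝ ∙ (x - y))ᗮ.reflection
  have hRx : R x = y := Submodule.reflection_sub h
  have hR : R ⁻¹' (closedBall y r₁ ∩ closedBall 0 r₂) = closedBall x r₁ ∩ closedBall 0 r₂ := by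
    rw [preimage_inter, R.preimage_closedBall, R.preimage_closedBall, map_zero, ← hRx,
      LinearIsometryEquiv.symm_apply_apply]
  rw [← hR, R.measurePreserving.measure_preimage
    (measurableSet_closedBall.inter measurableSet_closedBall).nullMeasurableSet]

lemma volume_closedBall_inter_closedBall_zero_le {x y : E2} (h : ‖x‖ ≤ ‖y‖) (r₁ r₂ : ℝ) :
    volume (closedBall y r₁ ∩ closedBall 0 r₂) ≤ volume (closedBall x r₁ ∩ closedBall 0 r₂) := by
  have hsingle : ∀ z : E2, ‖(EuclideanSpace.single 0 ‖z‖ : E2)‖ = ‖z‖ := fun z => by simp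
  rw [volume_closedBall_inter_closedBall_zero_congr (hsingle x).symm,
    volume_closedBall_inter_closedBall_zero_congr (hsingle y).symm]
  exact volume_closedBall_single_inter_closedBall_le r₁ r₂ (norm_nonneg x) h

section IsRadialLowerSet

variable {E : Type*} [NormedAddCommGroup E]

def IsRadialLowerSet (S : Set E) : Prop :=
  ∀ x ∈ S, ∀ y, ‖y‖ ≤ ‖x‖ → y ∈ S

variable {S : Set E}

lemma IsRadialLowerSet.measurableSet [MeasurableSpace E] [OpensMeasurableSpace E]
    (hS : IsRadialLowerSet S) : MeasurableSet S := by
  have hlower : IsLowerSet {r : ℝ | ∃ x ∈ S, r ≤ ‖x‖} :=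
    fun a b hba ⟨x, hx, hax⟩ => ⟨x, hx, hba.trans hax⟩
  have hS_eq : S = (‖·‖) ⁻¹' {r : ℝ | ∃ x ∈ S, r ≤ ‖x‖} :=
    ext fun y => ⟨fun hy => ⟨y, hy, le_rfl⟩, fun ⟨x, hx, hyx⟩ => hS x hx y hyx⟩
  rw [hS_eq]
  exact measurable_norm hlower.ordConnected.measurableSet

lemma IsRadialLowerSet.eq_univ_or_exists_ball_subset_subset_closedBall
    (hS : IsRadialLowerSet S) : S = univ ∨ ∃ r, ball 0 r ⊆ S ∧ S ⊆ closedBall 0 r := by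
  set u : ℝ≥0∞ := ⨆ x ∈ S, ‖x‖ₑ
  have hball : ∀ y : E, ‖y‖ₑ < u → y ∈ S := fun y hy => by
    obtain ⟨x, hx, hyx⟩ := lt_biSup_iff.1 hy
    exact hS x hx y (enorm_le_iff_norm_le.1 hyx.le)
  rcases eq_or_ne u ⊤ with hu | hu
  · exact .inl (eq_univ_of_forall fun y => hball y (hu ▸ enorm_lt_top))
  refine .inr ⟨u.toReal, fun y hy => hball y ?_, fun y hy => ?_⟩
  · rw [← ofReal_norm, ENNReal.ofReal_lt_iff_lt_toReal (norm_nonneg y) hu]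
    exact mem_ball_zero_iff.1 hy
  · rw [mem_closedBall_zero_iff, ← toReal_enorm]
    exact ENNReal.toReal_mono hu (le_biSup _ hy)

lemma ae_eq_closedBall_of_ball_subset_of_subset_closedBall [NormedSpace ℝ E]
    [FiniteDimensional ℝ E] [Nontrivial E] [MeasurableSpace E] [BorelSpace E] (μ : Measure E)
    [μ.IsAddHaarMeasure] {x : E} {r : ℝ} (hball : ball x r ⊆ S) (hclosedBall : S ⊆ closedBall x r) :
    S =ᵐ[μ] closedBall x r := by
  refine ae_eq_set.2 ⟨by simp [sdiff_eq_empty.2 hclosedBall],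
    measure_mono_null ?_ (Measure.addHaar_sphere μ x r)⟩
  rw [← closedBall_sdiff_ball]
  exact sdiff_subset_sdiff_right hball

end IsRadialLowerSet

lemma IsRadialLowerSet.volume_sub_preimage_inter_le {S T : Set E2} (hS : IsRadialLowerSet S)
    (hT : IsRadialLowerSet T) {x y : E2} (h : ‖x‖ ≤ ‖y‖) :
    volume ((y - ·) ⁻¹' S ∩ T) ≤ volume ((x - ·) ⁻¹' S ∩ T) := by
  rcases hS.eq_univ_or_exists_ball_subset_subset_closedBall with rfl | ⟨r₁, hball₁, hsub₁⟩
  · simp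
  rcases hT.eq_univ_or_exists_ball_subset_subset_closedBall with rfl | ⟨r₂, hball₂, hsub₂⟩
  · simp only [inter_univ]
    rw [(Measure.measurePreserving_sub_left volume y).measure_preimage
        hS.measurableSet.nullMeasurableSet,
      (Measure.measurePreserving_sub_left volume x).measure_preimage
        hS.measurableSet.nullMeasurableSet]
  have hae : ∀ w : E2, ((w - ·) ⁻¹' S ∩ T : Set E2) =ᵐ[volume]
      (closedBall w r₁ ∩ closedBall 0 r₂ : Set E2) := by
    intro w
    have hpre : (w - ·) ⁻¹' closedBall 0 r₁ = closedBall w r₁ := by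
      ext z
      simp [dist_eq_norm, norm_sub_rev]
    rw [← hpre]
    exact ((Measure.measurePreserving_sub_left volume w).quasiMeasurePreserving.preimage_ae_eq
      (ae_eq_closedBall_of_ball_subset_of_subset_closedBall volume hball₁ hsub₁)).inter
      (ae_eq_closedBall_of_ball_subset_of_subset_closedBall volume hball₂ hsub₂)
  rw [measure_congr (hae y), measure_congr (hae x)]
  exact volume_closedBall_inter_closedBall_zero_le h r₁ r₂

lemma lintegral_ofReal_mul_eq_lintegral_lintegral_measure {α : Type*} [MeasurableSpace α]
    (μ : Measure α) {f g : α → ℝ} (hf0 : 0 ≤ f) (hg0 : 0 ≤ g) (hf : Measurable f)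
    (hg : Measurable g) :
    ∫⁻ a, ENNReal.ofReal (f a * g a) ∂μ
      = ∫⁻ t in Ioi 0, ∫⁻ s in Ioi 0, μ ({a | t < f a} ∩ {a | s < g a}) := by
  calc ∫⁻ a, ENNReal.ofReal (f a * g a) ∂μ
      = ∫⁻ a, ENNReal.ofReal (f a) ∂μ.withDensity fun a => ENNReal.ofReal (g a) := by
        rw [lintegral_withDensity_eq_lintegral_mul _ (by fun_prop) (by fun_prop)]
        simp only [Pi.mul_apply, ENNReal.ofReal_mul (hf0 _), mul_comm]
    _ = ∫⁻ t in Ioi 0, ∫⁻ a, ENNReal.ofReal ({a | t < f a}.indicator g a) ∂μ := by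
        rw [lintegral_eq_lintegral_meas_lt _ (ae_of_all _ hf0) hf.aemeasurable]
        refine lintegral_congr fun t => ?_
        have hmeas : MeasurableSet {a | t < f a} := measurableSet_lt measurable_const hf
        rw [withDensity_apply _ hmeas, ← lintegral_indicator hmeas]
        refine lintegral_congr fun a => ?_
        by_cases ha : t < f a <;> simp [ha]
    _ = ∫⁻ t in Ioi 0, ∫⁻ s in Ioi 0, μ ({a | t < f a} ∩ {a | s < g a}) := by
        refine lintegral_congr fun t => ?_
        rw [lintegral_eq_lintegral_meas_lt _
          (ae_of_all _ fun a => indicator_nonneg (fun a _ => hg0 a) a)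
          (hg.indicator (measurableSet_lt measurable_const hf)).aemeasurable]
        refine setLIntegral_congr_fun measurableSet_Ioi fun s (hs : 0 < s) => ?_
        congr 1
        ext a
        by_cases ha : t < f a <;> simp [ha, hs.not_gt]

namespace RadialNonincreasing

variable {φ ψ : E2 → ℝ}

lemma isRadialLowerSet_setOf_lt (hφ : RadialNonincreasing φ) (t : ℝ) :
    IsRadialLowerSet {x | t < φ x} :=
  fun x hx y hyx => lt_of_lt_of_le hx (hφ y x hyx)

lemma measurable (hφ : RadialNonincreasing φ) : Measurable φ :=
  measurable_of_Ioi fun t => (hφ.isRadialLowerSet_setOf_lt t).measurableSet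

lemma lintegral_ofReal_mul_sub_le (hφ0 : ∀ x, 0 ≤ φ x) (hψ0 : ∀ x, 0 ≤ ψ x)
    (hφ : RadialNonincreasing φ) (hψ : RadialNonincreasing ψ) {x y : E2} (h : ‖x‖ ≤ ‖y‖) :
    ∫⁻ z, ENNReal.ofReal (φ (y - z) * ψ z) ≤ ∫⁻ z, ENNReal.ofReal (φ (x - z) * ψ z) := by
  have hφ_sub : ∀ w : E2, Measurable fun z => φ (w - z) := fun w =>
    hφ.measurable.comp (measurable_const.sub measurable_id)
  rw [lintegral_ofReal_mul_eq_lintegral_lintegral_measure volume (fun z => hφ0 _) hψ0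
      (hφ_sub y) hψ.measurable,
    lintegral_ofReal_mul_eq_lintegral_lintegral_measure volume (fun z => hφ0 _) hψ0
      (hφ_sub x) hψ.measurable]
  exact lintegral_mono fun t => lintegral_mono fun s =>
    (hφ.isRadialLowerSet_setOf_lt t).volume_sub_preimage_inter_le
      (hψ.isRadialLowerSet_setOf_lt s) h

end RadialNonincreasing

theorem convolution_radial_nonincreasing_general
    (φ ψ : EuclideanSpace ℝ (Fin 2) → ℝ)
    (hψint : Integrable ψ)
    (hφ0 : ∀ x, 0 ≤ φ x) (hψ0 : ∀ x, 0 ≤ ψ x)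
    (hφ : RadialNonincreasing φ) (hψ : RadialNonincreasing ψ) :
    RadialNonincreasing (fun y => ∫ z, φ (y - z) * ψ z) := by
  intro x y hxy
  have hconv : ∀ w : E2,
      ∫ z, φ (w - z) * ψ z = (∫⁻ z, ENNReal.ofReal (φ (w - z) * ψ z)).toReal := fun w =>
    integral_eq_lintegral_of_nonneg_ae (ae_of_all _ fun z => mul_nonneg (hφ0 _) (hψ0 z))
      ((hφ.measurable.comp (measurable_const.sub measurable_id)).mul
        hψ.measurable).aestronglyMeasurable
  have hfinite : ∫⁻ z, ENNReal.ofReal (φ (x - z) * ψ z) ≠ ∞ := by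
    refine ne_top_of_le_ne_top ?_ (lintegral_mono fun z =>
      (ENNReal.ofReal_le_ofReal (mul_le_mul_of_nonneg_right (hφ 0 (x - z) (by simp)) (hψ0 z))))
    simp only [ENNReal.ofReal_mul (hφ0 0)]
    rw [lintegral_const_mul' _ _ ENNReal.ofReal_ne_top]
    exact ENNReal.mul_ne_top ENNReal.ofReal_ne_top hψint.lintegral_lt_top.ne
  simp only [hconv]
  exact ENNReal.toReal_mono hfinite
    (RadialNonincreasing.lintegral_ofReal_mul_sub_le hφ0 hψ0 hφ hψ hxy)

theorem convolution_radial_nonincreasing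
    (φ ψ : EuclideanSpace ℝ (Fin 2) → ℝ)
    (hφint : Integrable φ) (hψint : Integrable ψ)
    (hφ0 : ∀ x, 0 ≤ φ x) (hψ0 : ∀ x, 0 ≤ ψ x)
    (hφ : RadialNonincreasing φ) (hψ : RadialNonincreasing ψ) :
    RadialNonincreasing (fun y => ∫ z, φ (y - z) * ψ z) :=
  convolution_radial_nonincreasing_general φ ψ hψint hφ0 hψ0 hφ hψ
end

section
/- For any r > 0 and y ∈ ℝ², the function ĥ(w) := Leb(B(-w, r) ∩ B(0, s/2) ∩ B(w, r₂)) (Lebesgue measure of the intersection of three balls in ℝ², for fixed radii r, s/2, r₂ > 0) is radially symmetric and non-increasing in w. -/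
/-!
A reflection of the plane fixing the origin and taking `w` to `(0, ‖w‖)` preserves Lebesgue
measure, so we may take `w = (0, t)` with `t = ‖w‖ ≥ 0`. Slicing along the lines `x = const`,
which are parallel to `w`, each slice is an intersection of three intervals centred at `-t`, `0`,
`t` with half-widths `a, b, c` depending on `x` only; its length is `f t + f (-t)` for the concave
function `f t = min (a - t, b, c + t)`, and an even concave function is non-increasing on `[0, ∞)`.
-/

open MeasureTheory Metric Set

def tripleBall {E : Type*} [SeminormedAddCommGroup E] (w : E) (r s r₂ : ℝ) : Set E :=
  ball (-w) r ∩ ball 0 s ∩ ball w r₂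

theorem ConcaveOn.antitoneOn_add_comp_neg {f : ℝ → ℝ} (hf : ConcaveOn ℝ univ f) :
    AntitoneOn (fun t => f t + f (-t)) (Ici 0) := by
  intro t ht t' ht' htt'
  simp only [mem_Ici] at ht ht'
  rcases ht'.eq_or_lt with rfl | ht'pos
  · rw [le_antisymm htt' ht]
  -- `t` and `-t` are the two convex combinations of `t'` and `-t'` with weights `l`, `m`
  set l := (t' + t) / (2 * t')
  set m := (t' - t) / (2 * t')
  have hl : 0 ≤ l := by positivity
  have hm : 0 ≤ m := div_nonneg (by linarith) (by positivity)
  have hlm : l + m = 1 := by simp only [l, m]; field_simp; ring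
  have hpos := hf.2 (mem_univ t') (mem_univ (-t')) hl hm hlm
  have hneg := hf.2 (mem_univ t') (mem_univ (-t')) hm hl (by linarith)
  have ht_eq : l • t' + m • -t' = t := by simp only [smul_eq_mul, l, m]; field_simp; ring
  have hnt_eq : m • t' + l • -t' = -t := by simp only [smul_eq_mul, l, m]; field_simp; ring
  rw [ht_eq, smul_eq_mul, smul_eq_mul] at hpos
  rw [hnt_eq, smul_eq_mul, smul_eq_mul] at hneg
  linear_combination hpos + hneg - (f t' + f (-t')) * hlm

theorem concaveOn_min_min_sub_add (a b c : ℝ) :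
    ConcaveOn ℝ univ fun t : ℝ => min (min (a - t) b) (c + t) :=
  (((concaveOn_const a convex_univ).sub (convexOn_id convex_univ)).inf
    (concaveOn_const b convex_univ)).inf
    ((concaveOn_const c convex_univ).add (concaveOn_id convex_univ))

theorem Real.volume_tripleBall (t a b c : ℝ) :
    volume (tripleBall t a b c) =
      ENNReal.ofReal (min (min (a - t) b) (c + t) + min (min (a + t) b) (c - t)) := by
  rw [tripleBall, Real.ball_eq_Ioo, Real.ball_eq_Ioo, Real.ball_eq_Ioo, Ioo_inter_Ioo,
    Ioo_inter_Ioo, Real.volume_Ioo, zero_add, zero_sub, show -t - a = -(a + t) by ring,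
    show t - c = -(c - t) by ring, max_neg_neg, max_neg_neg, sub_neg_eq_add, neg_add_eq_sub,
    add_comm t c]

theorem Real.antitoneOn_volume_tripleBall (a b c : ℝ) :
    AntitoneOn (fun t : ℝ => volume (tripleBall t a b c)) (Ici 0) := by
  intro t ht t' ht' htt'
  have := (concaveOn_min_min_sub_add a b c).antitoneOn_add_comp_neg ht ht' htt'
  simp only [sub_neg_eq_add, ← sub_eq_add_neg] at this
  simp only [Real.volume_tripleBall]
  exact ENNReal.ofReal_le_ofReal this

theorem isOpen_tripleBall {E : Type*} [SeminormedAddCommGroup E] (w : E) (r s r₂ : ℝ) :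
    IsOpen (tripleBall w r s r₂) :=
  (isOpen_ball.inter isOpen_ball).inter isOpen_ball

theorem LinearIsometryEquiv.preimage_tripleBall {E F : Type*} [SeminormedAddCommGroup E]
    [SeminormedAddCommGroup F] [Module ℝ E] [Module ℝ F] (f : E ≃ₗᵢ[ℝ] F) (w : E) (r s r₂ : ℝ) :
    f ⁻¹' tripleBall (f w) r s r₂ = tripleBall w r s r₂ := by
  simp only [tripleBall, preimage_inter, preimage_ball, map_neg, symm_apply_apply, _root_.map_zero]

theorem volume_tripleBall_eq_of_norm_eq {E : Type*} [NormedAddCommGroup E] [InnerProductSpace ℝ E]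
    [FiniteDimensional ℝ E] [MeasurableSpace E] [BorelSpace E] {u v : E} (h : ‖u‖ = ‖v‖)
    (r s r₂ : ℝ) : volume (tripleBall u r s r₂) = volume (tripleBall v r s r₂) := by
  set f := (ℝ ∙ (u - v))ᗮ.reflection
  have hfu : f u = v := Submodule.reflection_sub h
  rw [← hfu, ← f.preimage_tripleBall u,
    f.measurePreserving.measure_preimage (isOpen_tripleBall _ _ _ _).nullMeasurableSet]

namespace EuclideanSpace

theorem volume_eq_lintegral_volume_slice {S : Set (EuclideanSpace ℝ (Fin 2))}
    (hS : MeasurableSet S) : volume S = ∫⁻ x, volume {y : ℝ | !₂[x, y] ∈ S} := by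
  let φ := (MeasurableEquiv.toLp 2 (Fin 2 → ℝ)).symm.trans MeasurableEquiv.finTwoArrow
  have hφ : MeasurePreserving φ volume volume :=
    (volume_preserving_finTwoArrow ℝ).comp (volume_preserving_symm_measurableEquiv_toLp (Fin 2))
  rw [← hφ.symm.measure_preimage hS.nullMeasurableSet, Measure.volume_eq_prod,
    Measure.prod_apply (hS.preimage φ.symm.measurable)]
  rfl

/-- For `R ≤ |x - z 0|` the radius is `√(≤ 0) = 0`, giving the empty slice. -/
theorem setOf_mem_ball_slice (z : EuclideanSpace ℝ (Fin 2)) {R : ℝ} (hR : 0 ≤ R) (x : ℝ) :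
    {y : ℝ | !₂[x, y] ∈ ball z R} = ball (z 1) √(R ^ 2 - (x - z 0) ^ 2) := by
  ext y
  simp only [mem_ofPred_eq, mem_ball, EuclideanSpace.dist_eq, Fin.sum_univ_two, Real.dist_eq,
    Real.lt_sqrt (abs_nonneg _), sq_abs]
  rw [Real.sqrt_lt (by positivity) hR]
  simp only [Fin.isValue, Matrix.cons_val_zero, Matrix.cons_val_one, Matrix.cons_val_fin_one]
  constructor <;> intro h <;> linarith

theorem setOf_mem_tripleBall_slice {r s r₂ : ℝ} (hr : 0 ≤ r) (hs : 0 ≤ s) (hr₂ : 0 ≤ r₂)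
    (t x : ℝ) :
    {y : ℝ | !₂[x, y] ∈ tripleBall !₂[0, t] r s r₂} =
      tripleBall t √(r ^ 2 - x ^ 2) √(s ^ 2 - x ^ 2) √(r₂ ^ 2 - x ^ 2) := by
  simp only [tripleBall, mem_inter_iff, ofPred_and, setOf_mem_ball_slice _ hr,
    setOf_mem_ball_slice _ hs, setOf_mem_ball_slice _ hr₂]
  simp only [Fin.isValue, PiLp.neg_apply, PiLp.zero_apply, Matrix.cons_val_zero,
    Matrix.cons_val_one, Matrix.cons_val_fin_one, neg_zero, sub_zero]

theorem antitoneOn_volume_tripleBall_vertical {r s r₂ : ℝ} (hr : 0 ≤ r) (hs : 0 ≤ s)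
    (hr₂ : 0 ≤ r₂) :
    AntitoneOn (fun t : ℝ => volume (tripleBall !₂[0, t] r s r₂)) (Ici 0) := by
  intro t ht t' ht' htt'
  simp only [volume_eq_lintegral_volume_slice (isOpen_tripleBall _ _ _ _).measurableSet,
    setOf_mem_tripleBall_slice hr hs hr₂]
  exact lintegral_mono fun x => Real.antitoneOn_volume_tripleBall _ _ _ ht ht' htt'

end EuclideanSpace

theorem triple_ball_intersection_radial_nonincreasing
    (r r₂ s2 : ℝ) (hr : 0 < r) (hr₂ : 0 < r₂) (hs2 : 0 < s2)
    (w w' : EuclideanSpace ℝ (Fin 2)) (hww' : ‖w‖ ≤ ‖w'‖) :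
    volume (ball (-w') r ∩ ball (0 : EuclideanSpace ℝ (Fin 2)) s2 ∩ ball w' r₂) ≤
      volume (ball (-w) r ∩ ball (0 : EuclideanSpace ℝ (Fin 2)) s2 ∩ ball w r₂) := by
  have norm_vertical : ∀ v : EuclideanSpace ℝ (Fin 2), ‖v‖ = ‖!₂[0, ‖v‖]‖ := fun v => by
    simp [EuclideanSpace.norm_eq]
  change volume (tripleBall w' r s2 r₂) ≤ volume (tripleBall w r s2 r₂)
  rw [volume_tripleBall_eq_of_norm_eq (norm_vertical w),
    volume_tripleBall_eq_of_norm_eq (norm_vertical w')]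
  exact EuclideanSpace.antitoneOn_volume_tripleBall_vertical hr.le hs2.le hr₂.le (norm_nonneg w)
    (norm_nonneg w') hww'
end

section
/- For any radii r, t > 0 and y ∈ ℝ², Leb(B(y/2, r) ∩ B(-y/2, r) ∩ B(0, t)) ≥ Leb(B(y, r) ∩ B(0, r) ∩ B(0, t)), where B(z,r) is the Euclidean ball in ℝ² and Leb is Lebesgue measure. -/
/-!
Translating by `-y/2` turns the left-hand side into the volume of `K ∩ B(-y/2, t)`, where
`K = B(y/2, r) ∩ B(-y/2, r)` is symmetric. After a rotation `y` lies on the first axis. On every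
line parallel to it, `K` cuts out a symmetric interval, and a ball of radius `t` centred on the axis
cuts out an interval of the same length as `B(0, t)` does, only shifted; for symmetric intervals `I`, `J` one has
`|I ∩ (J + v)| ≤ min(|I|, |J|) = |I ∩ J|`, and integrating over the lines gives the claim.
-/

open MeasureTheory Metric Set

theorem volume_Ioo_inter_Ioo_le (s T v : ℝ) :
    volume (Ioo (-s) s ∩ Ioo (v - T) (v + T)) ≤ volume (Ioo (-s) s ∩ Ioo (-T) T) := by
  rw [Ioo_inter_Ioo, Ioo_inter_Ioo, Real.volume_Ioo, Real.volume_Ioo, max_neg_neg]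
  refine ENNReal.ofReal_le_ofReal ?_
  have := min_le_left s (v + T)
  have := min_le_right s (v + T)
  have := le_max_left (-s) (v - T)
  have := le_max_right (-s) (v - T)
  rcases min_cases s T with ⟨h, -⟩ | ⟨h, -⟩ <;> rw [h] <;> linarith

theorem Ioo_inter_Ioo_neg (c R : ℝ) :
    Ioo (c - R) (c + R) ∩ Ioo (-c - R) (-c + R) = Ioo (-(R - |c|)) (R - |c|) := by
  ext x
  simp only [mem_inter_iff, mem_Ioo]
  have := le_abs_self c
  have := neg_le_abs c
  constructor
  · rintro ⟨⟨h₁, h₂⟩, h₃, h₄⟩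
    rcases abs_cases c with ⟨h, -⟩ | ⟨h, -⟩ <;> rw [h] <;> constructor <;> linarith
  · rintro ⟨h₁, h₂⟩
    refine ⟨⟨?_, ?_⟩, ?_, ?_⟩ <;> linarith

/-- The Euclidean disc; `Metric.ball` in `ℝ × ℝ` would be a square for the sup metric. -/
def planeDisc (c : ℝ × ℝ) (ρ : ℝ) : Set (ℝ × ℝ) :=
  {p | (p.1 - c.1) ^ 2 + (p.2 - c.2) ^ 2 < ρ ^ 2}

theorem measurableSet_planeDisc (c : ℝ × ℝ) (ρ : ℝ) : MeasurableSet (planeDisc c ρ) :=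
  (isOpen_lt (by fun_prop) continuous_const).measurableSet

theorem measurableSet_planeDisc_inter (c₁ c₂ c₃ : ℝ × ℝ) (ρ₁ ρ₂ ρ₃ : ℝ) :
    MeasurableSet (planeDisc c₁ ρ₁ ∩ planeDisc c₂ ρ₂ ∩ planeDisc c₃ ρ₃) :=
  ((measurableSet_planeDisc _ _).inter (measurableSet_planeDisc _ _)).inter
    (measurableSet_planeDisc _ _)

theorem preimage_prodMk_planeDisc (a b ρ : ℝ) :
    (·, b) ⁻¹' planeDisc (a, 0) ρ = Ioo (a - √(ρ ^ 2 - b ^ 2)) (a + √(ρ ^ 2 - b ^ 2)) := by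
  ext x
  simp only [planeDisc, mem_preimage, mem_ofPred_eq, sub_zero]
  rw [← lt_sub_iff_add_lt, ← sq_abs, ← Real.lt_sqrt (abs_nonneg _), abs_sub_lt_iff, mem_Ioo]
  constructor <;> rintro ⟨h₁, h₂⟩ <;> constructor <;> linarith

theorem volume_lens_inter_planeDisc_le (c a r t : ℝ) :
    volume (planeDisc (c, 0) r ∩ planeDisc (-c, 0) r ∩ planeDisc (a, 0) t) ≤
      volume (planeDisc (c, 0) r ∩ planeDisc (-c, 0) r ∩ planeDisc (0, 0) t) := by
  rw [Measure.volume_eq_prod, Measure.prod_apply_symm (measurableSet_planeDisc_inter _ _ _ _ _ _),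
    Measure.prod_apply_symm (measurableSet_planeDisc_inter _ _ _ _ _ _)]
  refine lintegral_mono fun b => ?_
  simp only [preimage_inter, preimage_prodMk_planeDisc, Ioo_inter_Ioo_neg, zero_sub, zero_add]
  exact volume_Ioo_inter_Ioo_le _ _ _

def planeCoords (x : EuclideanSpace ℝ (Fin 2)) : ℝ × ℝ := (x 0, x 1)

theorem measurePreserving_planeCoords : MeasurePreserving planeCoords :=
  (volume_preserving_finTwoArrow ℝ).comp
    (EuclideanSpace.volume_preserving_symm_measurableEquiv_toLp (Fin 2))

theorem preimage_planeCoords_planeDisc (x : EuclideanSpace ℝ (Fin 2)) {ρ : ℝ} (hρ : 0 < ρ) :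
    planeCoords ⁻¹' planeDisc (planeCoords x) ρ = ball x ρ := by
  ext p
  rw [mem_ball, EuclideanSpace.dist_eq, Real.sqrt_lt' hρ, Fin.sum_univ_two]
  simp [planeCoords, planeDisc, Real.dist_eq, sq_abs]

theorem volume_lens_inter_ball_smul_le_of_apply_one_eq_zero {w : EuclideanSpace ℝ (Fin 2)}
    (hw : w 1 = 0) (s : ℝ) {r t : ℝ} (hr : 0 < r) (ht : 0 < t) :
    volume (ball w r ∩ ball (-w) r ∩ ball (s • w) t) ≤ volume (ball w r ∩ ball (-w) r ∩ ball 0 t) := by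
  rw [← preimage_planeCoords_planeDisc w hr, ← preimage_planeCoords_planeDisc (-w) hr,
    ← preimage_planeCoords_planeDisc (s • w) ht, ← preimage_planeCoords_planeDisc 0 ht,
    ← preimage_inter, ← preimage_inter, ← preimage_inter,
    measurePreserving_planeCoords.measure_preimage
      (measurableSet_planeDisc_inter _ _ _ _ _ _).nullMeasurableSet,
    measurePreserving_planeCoords.measure_preimage
      (measurableSet_planeDisc_inter _ _ _ _ _ _).nullMeasurableSet]
  simpa [planeCoords, hw] using volume_lens_inter_planeDisc_le (w 0) (s * w 0) r t

theorem volume_lens_inter_ball_smul_map {E : Type*} [NormedAddCommGroup E] [InnerProductSpace ℝ E]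
    [FiniteDimensional ℝ E] [MeasurableSpace E] [BorelSpace E] (f : E ≃ₗᵢ[ℝ] E)
    (z : E) (s r t : ℝ) :
    volume (ball (f z) r ∩ ball (-f z) r ∩ ball (s • f z) t) =
      volume (ball z r ∩ ball (-z) r ∩ ball (s • z) t) := by
  rw [← f.measurePreserving.measure_preimage
    ((measurableSet_ball.inter measurableSet_ball).inter measurableSet_ball).nullMeasurableSet]
  simp only [preimage_inter, f.preimage_ball, map_neg, map_smul, f.symm_apply_apply]

theorem volume_lens_inter_ball_smul_le (z : EuclideanSpace ℝ (Fin 2)) (s : ℝ) {r t : ℝ}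
    (hr : 0 < r) (ht : 0 < t) :
    volume (ball z r ∩ ball (-z) r ∩ ball (s • z) t) ≤ volume (ball z r ∩ ball (-z) r ∩ ball 0 t) := by
  set w := EuclideanSpace.single (0 : Fin 2) ‖z‖
  have hzw : ‖z‖ = ‖w‖ := by simp [w]
  set f := Submodule.reflection (ℝ ∙ (z - w))ᗮ
  have hfz : f z = w := Submodule.reflection_sub hzw
  have hcenter := volume_lens_inter_ball_smul_map f z 0 r t
  rw [zero_smul, zero_smul] at hcenter
  rw [← volume_lens_inter_ball_smul_map f z s, ← hcenter, hfz]
  exact volume_lens_inter_ball_smul_le_of_apply_one_eq_zero (by simp [w]) s hr ht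

theorem anderson_ball_inequality (r t : ℝ) (hr : 0 < r) (ht : 0 < t)
    (y : EuclideanSpace ℝ (Fin 2)) :
    volume (ball y r ∩ ball (0 : EuclideanSpace ℝ (Fin 2)) r ∩ ball (0 : EuclideanSpace ℝ (Fin 2)) t) ≤
      volume (ball ((2 : ℝ)⁻¹ • y) r ∩ ball (-((2 : ℝ)⁻¹ • y)) r ∩ ball (0 : EuclideanSpace ℝ (Fin 2)) t) := by
  set z := (2 : ℝ)⁻¹ • y
  have hyz : y - z = z := by rw [sub_eq_iff_eq_add, ← two_smul ℝ, smul_inv_smul₀ two_ne_zero]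
  have htranslate : ball z r ∩ ball (-z) r ∩ ball ((-1 : ℝ) • z) t =
      (· + z) ⁻¹' (ball y r ∩ ball 0 r ∩ ball 0 t) := by
    rw [preimage_inter, preimage_inter, preimage_add_right_ball, preimage_add_right_ball,
      preimage_add_right_ball, hyz, zero_sub, neg_one_smul]
  calc volume (ball y r ∩ ball 0 r ∩ ball 0 t)
      = volume (ball z r ∩ ball (-z) r ∩ ball ((-1 : ℝ) • z) t) := by
        rw [htranslate, measure_preimage_add_right]
    _ ≤ _ := volume_lens_inter_ball_smul_le z (-1) hr ht
end

section
/- Let f : ℝ² → [0,∞) be integrable, radially symmetric and radially non-increasing, and not almost everywhere constant on its support in a way that E[f(aZ)] is non-constant. Then the map a ↦ ∫_{ℝ²} f(y) g_a(y) dy is non-increasing in a > 0; in particular if f is strictly radially decreasing on a set of positive measure then the map is strictly decreasing. -/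
open MeasureTheory Real

/-!
The substitution `y = √a • z` turns the Gaussian average at variance `a` into
`∫ f (√a • z) g₁(z) dz`. For radially non-increasing `f` this integrand decreases pointwise as `a`
grows, and strictly at every `z ≠ 0` when `f` is strictly radially decreasing; since `g₁ > 0`
and `{0}ᶜ` has positive measure, the averages decrease, strictly in the second case.
-/

noncomputable def heatKernel (t : ℝ) (x : EuclideanSpace ℝ (Fin 2)) : ℝ :=
  (1 / (2 * π * t)) * Real.exp (-‖x‖ ^ 2 / (2 * t))

section Radial

variable {E : Type*} [NormedAddCommGroup E] {f : E → ℝ}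

def RadiallyAntitone (f : E → ℝ) : Prop := ∀ x y : E, ‖x‖ ≤ ‖y‖ → f y ≤ f x

def RadiallyStrictAnti (f : E → ℝ) : Prop := ∀ x y : E, ‖x‖ < ‖y‖ → f y < f x

lemma RadiallyAntitone.apply_le_apply_zero (hf : RadiallyAntitone f) (x : E) : f x ≤ f 0 :=
  hf 0 x (by simp)

variable [NormedSpace ℝ E]

lemma RadiallyAntitone.apply_smul_le {c d : ℝ} (hf : RadiallyAntitone f) (hc : 0 ≤ c)
    (hcd : c ≤ d) (x : E) : f (d • x) ≤ f (c • x) :=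
  hf _ _ <| by
    rw [norm_smul, norm_smul, norm_of_nonneg hc, norm_of_nonneg (hc.trans hcd)]
    gcongr

lemma RadiallyStrictAnti.apply_smul_lt {c d : ℝ} (hf : RadiallyStrictAnti f) (hc : 0 ≤ c)
    (hcd : c < d) {x : E} (hx : x ≠ 0) : f (d • x) < f (c • x) :=
  hf _ _ <| by
    rw [norm_smul, norm_smul, norm_of_nonneg hc, norm_of_nonneg (hc.trans hcd.le)]
    gcongr

/-- Such an `f` is `ρ ∘ ‖·‖` for the antitone profile `ρ r = f (max r 0 • e)`, `‖e‖ = 1`. -/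
lemma RadiallyAntitone.measurable [MeasurableSpace E] [BorelSpace E] (hf : RadiallyAntitone f) :
    Measurable f := by
  cases subsingleton_or_nontrivial E
  · exact Subsingleton.measurable
  obtain ⟨e, he⟩ := exists_norm_eq E zero_le_one
  have hprofile : Antitone fun r : ℝ => f (max r 0 • e) := fun r s hrs =>
    hf.apply_smul_le (le_max_right r 0) (max_le_max_right 0 hrs) e
  have hnorm (y : E) : ‖max ‖y‖ 0 • e‖ = ‖y‖ := by
    rw [norm_smul, he, mul_one, max_eq_left (norm_nonneg y), norm_norm]
  have hf_eq : f = (fun r : ℝ => f (max r 0 • e)) ∘ norm :=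
    funext fun y => le_antisymm (hf _ _ (hnorm y).le) (hf _ _ (hnorm y).ge)
  rw [hf_eq]
  exact hprofile.measurable.comp measurable_norm

end Radial

section WeightedAverage

variable {E : Type*} [NormedAddCommGroup E] [NormedSpace ℝ E] [MeasurableSpace E] [BorelSpace E]
  {μ : Measure E} {f w : E → ℝ}

lemma RadiallyAntitone.integrable_comp_smul_mul (hf : RadiallyAntitone f) (hf0 : ∀ x, 0 ≤ f x)
    (hw : Integrable w μ) (c : ℝ) : Integrable (fun z => f (c • z) * w z) μ :=
  hw.bdd_mul (c := f 0) ((hf.measurable.comp (measurable_const_smul c)).aestronglyMeasurable)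
    (.of_forall fun z => by
      rw [norm_of_nonneg (hf0 _)]
      exact hf.apply_le_apply_zero _)

lemma RadiallyAntitone.antitoneOn_integral_comp_smul_mul (hf : RadiallyAntitone f)
    (hf0 : ∀ x, 0 ≤ f x) (hw : Integrable w μ) (hw0 : ∀ z, 0 ≤ w z) :
    AntitoneOn (fun c : ℝ => ∫ z, f (c • z) * w z ∂μ) (Set.Ici 0) := fun c hc d _ hcd =>
  integral_mono (hf.integrable_comp_smul_mul hf0 hw d) (hf.integrable_comp_smul_mul hf0 hw c)
    fun z => mul_le_mul_of_nonneg_right (hf.apply_smul_le hc hcd z) (hw0 z)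

lemma RadiallyStrictAnti.strictAntiOn_integral_comp_smul_mul [Nontrivial E] [μ.IsOpenPosMeasure]
    (hfs : RadiallyStrictAnti f) (hf : RadiallyAntitone f) (hf0 : ∀ x, 0 ≤ f x)
    (hw : Integrable w μ) (hw0 : ∀ z, 0 < w z) :
    StrictAntiOn (fun c : ℝ => ∫ z, f (c • z) * w z ∂μ) (Set.Ici 0) := by
  intro c hc d _ hcd
  have hc_int := hf.integrable_comp_smul_mul hf0 hw c
  have hd_int := hf.integrable_comp_smul_mul hf0 hw d
  rw [← sub_pos, ← integral_sub hc_int hd_int]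
  refine (integral_pos_iff_support_of_nonneg (f := fun z => f (c • z) * w z - f (d • z) * w z)
    (fun z => ?_) (hc_int.sub hd_int)).2 ?_
  · exact sub_nonneg.2 (mul_le_mul_of_nonneg_right (hf.apply_smul_le hc hcd.le z) (hw0 z).le)
  · have hsupport : {(0 : E)}ᶜ ⊆ Function.support
        fun z => f (c • z) * w z - f (d • z) * w z := fun z hz =>
      (sub_pos.2 (mul_lt_mul_of_pos_right (hfs.apply_smul_lt hc hcd hz) (hw0 z))).ne'
    exact (isOpen_compl_singleton.measure_pos μ (exists_ne 0)).trans_le (measure_mono hsupport)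

end WeightedAverage

lemma heatKernel_pos {a : ℝ} (ha : 0 < a) (x : EuclideanSpace ℝ (Fin 2)) :
    0 < heatKernel a x := by
  unfold heatKernel; positivity

lemma integrable_heatKernel {a : ℝ} (ha : 0 < a) : Integrable (heatKernel a) := by
  have hgauss : ∫ x : EuclideanSpace ℝ (Fin 2), rexp (-(2 * a)⁻¹ * ‖x‖ ^ 2) ≠ 0 := by
    rw [GaussianFourier.integral_rexp_neg_mul_sq_norm (by positivity)]
    positivity
  convert (Integrable.of_integral_ne_zero hgauss).const_mul (1 / (2 * π * a)) using 3 with x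
  unfold heatKernel; ring_nf

lemma integral_mul_heatKernel_eq (g : EuclideanSpace ℝ (Fin 2) → ℝ) {a : ℝ} (ha : 0 < a) :
    ∫ y, g y * heatKernel a y = ∫ z, g (√a • z) * heatKernel 1 z := by
  have hscale (z : EuclideanSpace ℝ (Fin 2)) : heatKernel 1 z = a * heatKernel a (√a • z) := by
    simp only [heatKernel, norm_smul, mul_pow, norm_of_nonneg (sqrt_nonneg a), sq_sqrt ha.le]
    field_simp
  have hcomp := Measure.integral_comp_smul volume (fun y => g y * heatKernel a y) √a
  rw [finrank_euclideanSpace_fin, sq_sqrt ha.le, abs_of_pos (inv_pos.2 ha), smul_eq_mul] at hcomp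
  simp_rw [hscale, mul_left_comm _ a, integral_const_mul, hcomp]
  field_simp

theorem gaussian_average_antitone_general
    (f : EuclideanSpace ℝ (Fin 2) → ℝ)
    (h0 : ∀ x, 0 ≤ f x)
    (hrad : ∀ x y : EuclideanSpace ℝ (Fin 2), ‖x‖ ≤ ‖y‖ → f y ≤ f x) :
    AntitoneOn (fun a => ∫ y : EuclideanSpace ℝ (Fin 2), f y * heatKernel a y)
        (Set.Ioi (0 : ℝ)) ∧
      ((∀ x y : EuclideanSpace ℝ (Fin 2), ‖x‖ < ‖y‖ → f y < f x) →
        StrictAntiOn (fun a => ∫ y : EuclideanSpace ℝ (Fin 2), f y * heatKernel a y)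
          (Set.Ioi (0 : ℝ))) := by
  have hw := integrable_heatKernel one_pos
  have hw0 := heatKernel_pos one_pos
  have hsqrt : Set.MapsTo (√·) (Set.Ioi 0) (Set.Ici 0) := fun a _ => sqrt_nonneg a
  refine ⟨fun a ha b hb hab => ?_, fun hstrict a ha b hb hab => ?_⟩
  · simp only [integral_mul_heatKernel_eq f ha, integral_mul_heatKernel_eq f hb]
    exact RadiallyAntitone.antitoneOn_integral_comp_smul_mul hrad h0 hw (fun z => (hw0 z).le)
      (hsqrt ha) (hsqrt hb) (sqrt_le_sqrt hab)
  · simp only [integral_mul_heatKernel_eq f ha, integral_mul_heatKernel_eq f hb]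
    exact RadiallyStrictAnti.strictAntiOn_integral_comp_smul_mul hstrict hrad h0 hw hw0
      (hsqrt ha) (hsqrt hb) (sqrt_lt_sqrt (le_of_lt ha) hab)

theorem gaussian_average_antitone
    (f : EuclideanSpace ℝ (Fin 2) → ℝ)
    (hint : Integrable f) (h0 : ∀ x, 0 ≤ f x)
    (hrad : ∀ x y : EuclideanSpace ℝ (Fin 2), ‖x‖ ≤ ‖y‖ → f y ≤ f x) :
    AntitoneOn (fun a => ∫ y : EuclideanSpace ℝ (Fin 2), f y * heatKernel a y)
        (Set.Ioi (0 : ℝ)) ∧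
      ((∀ x y : EuclideanSpace ℝ (Fin 2), ‖x‖ < ‖y‖ → f y < f x) →
        StrictAntiOn (fun a => ∫ y : EuclideanSpace ℝ (Fin 2), f y * heatKernel a y)
          (Set.Ioi (0 : ℝ))) :=
  gaussian_average_antitone_general f h0 hrad
end

section
/- Let G_θ(t) = ∫₀^∞ e^{(θ-γ)u} u t^{u-1} / Γ(u+1) du for t ∈ (0,1], where γ is the Euler–Mascheroni constant. Then for every θ ∈ ℝ and t ∈ (0,1], the integral defining G_θ(t) converges and G_θ(t) > 0. -/
/-!
Restricting Euler's integral for `Γ(u + 1)` to `[R, 2R]` gives `Γ(u + 1) ≥ R ^ u · R e^{-2R}`;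
with `R = e^{c + 1}` this shows that `e^{c u} / Γ(u + 1)` is at most a constant times `e^{-u}`.
Since `t ^ (u - 1) ≤ t⁻¹` for `t ∈ (0, 1]`, the integrand is positive, continuous and dominated
by a multiple of `u e^{-u}`, the integrand of `Γ(2)`.
-/

open MeasureTheory Real

/-- The Euler–Mascheroni constant, `γ = -∫₀^∞ (log u) e^{-u} du`. -/
noncomputable def eulerGamma : ℝ := -∫ u in Set.Ioi (0 : ℝ), Real.log u * Real.exp (-u)

open Set

lemma rpow_mul_sub_mul_exp_neg_le_Gamma_add_one {a b u : ℝ} (ha : 0 < a) (hab : a ≤ b)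
    (hu : 0 ≤ u) : a ^ u * ((b - a) * exp (-b)) ≤ Gamma (u + 1) := by
  have hint : IntegrableOn (fun x => exp (-x) * x ^ (u + 1 - 1)) (Ioi 0) :=
    GammaIntegral_convergent (by linarith)
  have hsub : Icc a b ⊆ Ioi 0 := fun x hx => ha.trans_le hx.1
  have hlow : ∀ x ∈ Icc a b, exp (-b) * a ^ u ≤ exp (-x) * x ^ (u + 1 - 1) := by
    intro x hx
    rw [add_sub_cancel_right]
    gcongr
    exacts [hx.2, hx.1]
  calc a ^ u * ((b - a) * exp (-b))
      = (volume (Icc a b)).toReal * (exp (-b) * a ^ u) := by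
        rw [volume_Icc, ENNReal.toReal_ofReal (by linarith)]; ring
    _ ≤ ∫ x in Icc a b, exp (-x) * x ^ (u + 1 - 1) :=
        setIntegral_ge_of_const_le measurableSet_Icc (by simp) hlow (hint.mono_set hsub)
    _ ≤ ∫ x in Ioi 0, exp (-x) * x ^ (u + 1 - 1) :=
        setIntegral_mono_set hint
          ((ae_restrict_mem measurableSet_Ioi).mono fun x (hx : 0 < x) => by positivity)
          hsub.eventuallyLE
    _ = Gamma (u + 1) := (Gamma_eq_integral (by linarith)).symm

lemma exists_exp_mul_le_mul_Gamma_add_one (s : ℝ) :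
    ∃ C, 0 < C ∧ ∀ u, 0 ≤ u → exp (s * u) ≤ C * Gamma (u + 1) := by
  set R := exp s
  have hR : 0 < R := exp_pos s
  refine ⟨(R * exp (-(2 * R)))⁻¹, by positivity, fun u hu => ?_⟩
  have h := rpow_mul_sub_mul_exp_neg_le_Gamma_add_one hR (by linarith : R ≤ 2 * R) hu
  rw [show 2 * R - R = R by ring, ← exp_mul] at h
  rw [inv_mul_eq_div, le_div_iff₀ (by positivity)]
  linarith

lemma setIntegral_pos_of_pos {X : Type*} [MeasurableSpace X] {μ : Measure X} {s : Set X}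
    {f : X → ℝ} (hs : MeasurableSet s) (hμs : μ s ≠ 0) (hf : IntegrableOn f s μ)
    (hpos : ∀ x ∈ s, 0 < f x) : 0 < ∫ x in s, f x ∂μ := by
  rw [setIntegral_pos_iff_support_of_nonneg_ae
    ((ae_restrict_mem hs).mono fun x hx => (hpos x hx).le) hf]
  refine pos_iff_ne_zero.2 fun h => hμs (measure_mono_null ?_ h)
  exact fun x hx => ⟨(hpos x hx).ne', hx⟩

/-- `G_θ(t) = ∫₀^∞ gIntegrand (θ - γ) t u du`. -/
noncomputable def gIntegrand (c t u : ℝ) : ℝ := exp (c * u) * u * t ^ (u - 1) / Gamma (u + 1)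

lemma gIntegrand_pos (c : ℝ) {t u : ℝ} (ht : 0 < t) (hu : 0 < u) : 0 < gIntegrand c t u :=
  div_pos (by positivity) (Gamma_pos_of_pos (by linarith))

lemma continuousOn_gIntegrand (c : ℝ) {t : ℝ} (ht : 0 < t) :
    ContinuousOn (gIntegrand c t) (Ioi 0) := by
  have hpow : Continuous fun u : ℝ => t ^ (u - 1) :=
    continuous_const.rpow (by fun_prop) fun _ => Or.inl ht.ne'
  have hΓ : ContinuousOn (fun u : ℝ => Gamma (u + 1)) (Ioi 0) :=
    differentiableOn_Gamma_Ioi.continuousOn.comp (by fun_prop) fun u (hu : 0 < u) => by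
      simp only [mem_Ioi]; linarith
  exact ContinuousOn.div (by fun_prop) hΓ fun u (hu : 0 < u) =>
    (Gamma_pos_of_pos (by linarith)).ne'

lemma exists_gIntegrand_le (c : ℝ) {t : ℝ} (ht0 : 0 < t) (ht1 : t ≤ 1) :
    ∃ C, ∀ u, 0 < u → gIntegrand c t u ≤ C * (exp (-u) * u ^ ((2 : ℝ) - 1)) := by
  obtain ⟨C, hC, hexp⟩ := exists_exp_mul_le_mul_Gamma_add_one (c + 1)
  refine ⟨C * t⁻¹, fun u hu => ?_⟩
  have hΓ : 0 < Gamma (u + 1) := Gamma_pos_of_pos (by linarith)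
  have ht : t ^ (u - 1) ≤ t⁻¹ := by
    rw [rpow_sub ht0, rpow_one, div_eq_mul_inv]
    exact mul_le_of_le_one_left (by positivity) (rpow_le_one ht0.le ht1 hu.le)
  have hratio : exp ((c + 1) * u) / Gamma (u + 1) ≤ C := (div_le_iff₀ hΓ).2 (hexp u hu.le)
  calc gIntegrand c t u = exp ((c + 1) * u) / Gamma (u + 1) * t ^ (u - 1) * (exp (-u) * u) := by
        rw [gIntegrand, show c * u = (c + 1) * u + -u by ring, exp_add]; ring
    _ ≤ C * t⁻¹ * (exp (-u) * u ^ ((2 : ℝ) - 1)) := by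
        rw [show (2 : ℝ) - 1 = 1 by norm_num, rpow_one]
        gcongr

lemma integrableOn_gIntegrand (c : ℝ) {t : ℝ} (ht0 : 0 < t) (ht1 : t ≤ 1) :
    IntegrableOn (gIntegrand c t) (Ioi 0) := by
  obtain ⟨C, hle⟩ := exists_gIntegrand_le c ht0 ht1
  refine ((GammaIntegral_convergent two_pos).const_mul C).mono'
    ((continuousOn_gIntegrand c ht0).aestronglyMeasurable measurableSet_Ioi) ?_
  filter_upwards [ae_restrict_mem measurableSet_Ioi] with u (hu : 0 < u)
  rw [norm_of_nonneg (gIntegrand_pos c ht0 hu).le]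
  exact hle u hu

theorem G_theta_integrable_and_pos (θ t : ℝ) (ht0 : 0 < t) (ht1 : t ≤ 1) :
    IntegrableOn
        (fun u => Real.exp ((θ - eulerGamma) * u) * u * t ^ (u - 1) / Real.Gamma (u + 1))
        (Set.Ioi (0 : ℝ)) ∧
      0 < ∫ u in Set.Ioi (0 : ℝ),
        Real.exp ((θ - eulerGamma) * u) * u * t ^ (u - 1) / Real.Gamma (u + 1) := by
  have hint := integrableOn_gIntegrand (θ - eulerGamma) ht0 ht1
  exact ⟨hint, setIntegral_pos_of_pos measurableSet_Ioi (by simp) hint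
    fun u hu => gIntegrand_pos _ ht0 hu⟩
end
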